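/- arXiv:2402.18210 — 2 statements merged into one kernel-verified Lean document; each statement's English description precedes it below -/
import Mathlib

section
/- Let k be a field of characteristic zero, V a finite-dimensional k-vector space with basis of linear forms β₁,…,β_d of the dual space, and let r ≥ 2. If β is a nonzero linear form on V such that the r-th power β^r (as an element of the degree-r part of the symmetric algebra of the dual space) lies in the k-span of β₁^r,…,β_d^r, then β is a scalar multiple of one of the β_i. -/
/-!
Let `e` be the basis of `V` dual to `B` and write `β = ∑ bₘ Bₘ`. If `bᵢ ≠ 0`, evaluating the
relation `β ^ r = ∑ cₘ Bₘ ^ r` at `s • eᵢ + eⱼ` for `j ≠ i` gives the polynomial identity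
`(bᵢ s + bⱼ) ^ r = cᵢ s ^ r + cⱼ` in `s`. Since `r ≥ 2`, the coefficient of `s ^ (r - 1)` on the
left is `r bᵢ ^ (r - 1) bⱼ`, while the right has none; in characteristic zero this forces
`bⱼ = 0`. Hence `β = bᵢ Bᵢ`.
-/

open Polynomial in
theorem eq_zero_of_forall_add_pow_eq {k : Type*} [Field k] [CharZero k] {b c c' : k} {r : ℕ}
    (hr : 2 ≤ r) (h : ∀ t : k, (t + b) ^ r = c * t ^ r + c') : b = 0 := by
  have hpoly : (X + C b) ^ r = C c * X ^ r + C c' :=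
    Polynomial.funext fun t => by simpa using h t
  have hcoeff := congrArg (coeff · (r - 1)) hpoly
  simp only [coeff_X_add_C_pow, coeff_add, coeff_C_mul_X_pow, coeff_C,
    Nat.sub_sub_self (by omega : 1 ≤ r), pow_one, Nat.choose_symm (by omega : 1 ≤ r),
    Nat.choose_one_right] at hcoeff
  simpa [show r - 1 ≠ r by omega, show r - 1 ≠ 0 by omega, show r ≠ 0 by omega] using hcoeff

theorem eq_zero_of_forall_mul_add_pow_eq {k : Type*} [Field k] [CharZero k] {a b c c' : k}
    {r : ℕ} (hr : 2 ≤ r) (ha : a ≠ 0) (h : ∀ s : k, (a * s + b) ^ r = c * s ^ r + c') :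
    b = 0 :=
  eq_zero_of_forall_add_pow_eq (c := c / a ^ r) (c' := c') hr fun t => by
    rw [← mul_div_cancel₀ t ha, h, div_pow, mul_div_cancel₀ t ha]
    field_simp

namespace Module.Basis

variable {R M ι : Type*} [CommRing R] [AddCommGroup M] [Module R M]

theorem eq_repr_smul_of_repr_eq_zero (B : Basis ι R M) {x : M} {i : ι}
    (hx : ∀ j, j ≠ i → B.repr x j = 0) : x = B.repr x i • B i :=
  B.ext_elem fun j => by
    by_cases hj : j = i
    · simp [hj]
    · simp [hx j hj, Ne.symm hj]

variable [DecidableEq ι]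

theorem exists_apply_eq_ite [IsReflexive R M] [Finite ι] (B : Basis ι R (Dual R M)) :
    ∃ e : ι → M, ∀ m n, B m (e n) = if m = n then 1 else 0 :=
  ⟨fun n => (evalEquiv R M).symm (B.dualBasis n), fun m n => by
    simp [Finsupp.single_apply]⟩

variable [Fintype ι] {B : Basis ι R (Dual R M)} {e : ι → M}

theorem apply_eq_repr_of_apply_eq_ite (he : ∀ m n, B m (e n) = if m = n then 1 else 0)
    (β : Dual R M) (n : ι) : β (e n) = B.repr β n := by
  nth_rw 1 [← B.sum_repr β]
  rw [LinearMap.sum_apply]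
  simp [he]

theorem sum_mul_apply_smul_add_pow (he : ∀ m n, B m (e n) = if m = n then 1 else 0)
    (c : ι → R) {i j : ι} (hij : i ≠ j) {r : ℕ} (hr : r ≠ 0) (s : R) :
    ∑ m, c m * B m (s • e i + e j) ^ r = c i * s ^ r + c j := by
  have hterm (m : ι) :
      B m (s • e i + e j) ^ r = (if m = i then s ^ r else 0) + if m = j then 1 else 0 := by
    simp only [map_add, map_smul, he, smul_eq_mul]
    split_ifs <;> simp_all [zero_pow hr]
  simp only [hterm, mul_add, Finset.sum_add_distrib]
  simp [Finset.sum_ite_eq']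

end Module.Basis

/-- If `β^r` (as a polynomial function, i.e. in the symmetric algebra of the dual,
viewed inside functions `V → k` which is injective in characteristic zero) lies in the span of
`β₁^r, …, β_d^r` for a basis `β₁, …, β_d` of the dual space and `r ≥ 2`, then `β` is a scalar
multiple of some `β_i`. -/
theorem stmt0 {k V : Type*} [Field k] [CharZero k] [AddCommGroup V] [Module k V]
    [FiniteDimensional k V] {d : ℕ} (B : Module.Basis (Fin d) k (Module.Dual k V))
    (r : ℕ) (hr : 2 ≤ r) (β : Module.Dual k V) (hβ : β ≠ 0)
    (hspan : (fun v => (β v) ^ r) ∈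
      Submodule.span k (Set.range fun i : Fin d => (fun v => (B i v) ^ r : V → k))) :
    ∃ (i : Fin d) (c : k), β = c • B i := by
  obtain ⟨c, hc⟩ := (Submodule.mem_span_range_iff_exists_fun k).1 hspan
  obtain ⟨e, he⟩ := B.exists_apply_eq_ite
  obtain ⟨i, hi⟩ : ∃ i, B.repr β i ≠ 0 := by
    by_contra! h
    exact hβ (B.repr.map_eq_zero_iff.1 (Finsupp.ext h))
  refine ⟨i, B.repr β i, B.eq_repr_smul_of_repr_eq_zero fun j hj => ?_⟩
  refine eq_zero_of_forall_mul_add_pow_eq hr hi (c := c i) (c' := c j) fun s => ?_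
  have hs := congrFun hc (s • e i + e j)
  simp only [Finset.sum_apply, Pi.smul_apply, smul_eq_mul] at hs
  rw [B.sum_mul_apply_smul_add_pow he c (Ne.symm hj) (by omega), map_add, map_smul,
    B.apply_eq_repr_of_apply_eq_ite he, B.apply_eq_repr_of_apply_eq_ite he, smul_eq_mul,
    mul_comm s] at hs
  exact hs.symm
end

section
/- Let ℓ ≥ 1, κ : ℤ → ℂ ℓ-periodic with κ(0)=0, and D the operator on ℂ[x,x⁻¹] given by D(xⁱ) = (i + ℓκ(i))x^{i−1}. Then for every integer n ≥ 0, D^ℓ(x^{ℓ(n+1)}) = (∏_{i=0}^{ℓ−1} (ℓ(n+1) − i + ℓ·κ(−i))) · x^{ℓn}. Equivalently, the b-function of f = x^ℓ is b(s) = ∏_{j=1}^{ℓ} ℓ·(s + j/ℓ + κ(j)). -/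
/-!
`D` sends `T i` to a multiple of `T (i - 1)`, so `D ^ ℓ` applied to `T (ℓ (n + 1))` collects the
weights at `ℓ (n + 1) - i` for `i < ℓ`; periodicity of `κ` turns `κ (ℓ (n + 1) - i)` into
`κ (-i)`, and reindexing by `i ↦ ℓ - i` gives the second product.
-/

open LaurentPolynomial

theorem LaurentPolynomial.pow_apply_T_of_apply_T {R : Type*} [CommSemiring R]
    {D : Module.End R R[T;T⁻¹]} {c : ℤ → R} (hD : ∀ i, D (T i) = c i • T (i - 1))
    (k : ℕ) (m : ℤ) :
    (D ^ k) (T m) = (∏ i ∈ Finset.range k, c (m - i)) • T (m - k) := by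
  induction k generalizing m with
  | zero => simp
  | succ k ih =>
    rw [pow_succ, Module.End.mul_apply, hD, map_smul, ih, smul_smul, Finset.prod_range_succ',
      mul_comm]
    push_cast
    simp only [sub_sub, add_comm (1 : ℤ), sub_zero]

theorem prod_range_eq_prod_Icc_of_periodic {ℓ : ℕ} {κ : ℤ → ℂ}
    (hκ : Function.Periodic κ ℓ) (s : ℂ) :
    ∏ i ∈ Finset.range ℓ, ((ℓ : ℂ) * (s + 1) - i + ℓ * κ (-(i : ℤ))) =
      ∏ j ∈ Finset.Icc 1 ℓ, (ℓ : ℂ) * (s + j / ℓ + κ j) := by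
  have reflect := Finset.prod_Ico_reflect (fun j => (ℓ : ℂ) * (s + j / ℓ + κ j)) 0 ℓ.le_succ
  rw [Nat.add_sub_cancel_left, Nat.sub_zero, Finset.Ico_add_one_right_eq_Icc] at reflect
  rw [← reflect, Finset.range_eq_Ico]
  refine Finset.prod_congr rfl fun i hi => ?_
  have hiℓ : i < ℓ := (Finset.mem_Ico.mp hi).2
  have hℓ : (ℓ : ℂ) ≠ 0 := Nat.cast_ne_zero.mpr (by omega)
  rw [Nat.cast_sub hiℓ.le, Nat.cast_sub hiℓ.le, hκ.sub_eq']
  field_simp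
  ring

theorem stmt2_general (ℓ : ℕ) (κ : ℤ → ℂ)
    (hper : ∀ i : ℤ, κ (i + ℓ) = κ i)
    (D : Module.End ℂ (LaurentPolynomial ℂ))
    (hD : ∀ i : ℤ, D (T i) = ((i : ℂ) + ℓ * κ i) • T (i - 1)) :
    ∀ n : ℕ,
      (D ^ ℓ) (T ((ℓ : ℤ) * (n + 1))) =
        (∏ i ∈ Finset.range ℓ, ((ℓ : ℂ) * (n + 1) - i + ℓ * κ (-(i : ℤ)))) • T ((ℓ : ℤ) * n) ∧
      (∏ i ∈ Finset.range ℓ, ((ℓ : ℂ) * (n + 1) - i + ℓ * κ (-(i : ℤ)))) =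
        ∏ j ∈ Finset.Icc 1 ℓ, (ℓ : ℂ) * ((n : ℂ) + j / ℓ + κ j) := by
  have hκ : Function.Periodic κ ℓ := hper
  intro n
  refine ⟨?_, prod_range_eq_prod_Icc_of_periodic hκ n⟩
  rw [pow_apply_T_of_apply_T hD]
  congr 1
  · have hκn : Function.Periodic κ (ℓ * (n + 1)) := by simpa [mul_comm] using hκ.nat_mul (n + 1)
    refine Finset.prod_congr rfl fun i _ => ?_
    rw [hκn.sub_eq']
    push_cast
    ring
  · rw [mul_add_one, add_sub_cancel_right]

/-- The `b`-function of `f = x^ℓ` for the rank-one Dunkl operator `D` of `ℤ/ℓℤ`: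
`D^ℓ(x^{ℓ(n+1)}) = (∏_{i=0}^{ℓ−1} (ℓ(n+1) − i + ℓκ(−i)))·x^{ℓn}`, and the product equals
`∏_{j=1}^{ℓ} ℓ·(n + j/ℓ + κ(j))`. -/
theorem stmt2 (ℓ : ℕ) (hℓ : 1 ≤ ℓ) (κ : ℤ → ℂ)
    (hper : ∀ i : ℤ, κ (i + ℓ) = κ i) (h0 : κ 0 = 0)
    (D : Module.End ℂ (LaurentPolynomial ℂ))
    (hD : ∀ i : ℤ, D (T i) = ((i : ℂ) + ℓ * κ i) • T (i - 1)) :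
    ∀ n : ℕ,
      (D ^ ℓ) (T ((ℓ : ℤ) * (n + 1))) =
        (∏ i ∈ Finset.range ℓ, ((ℓ : ℂ) * (n + 1) - i + ℓ * κ (-(i : ℤ)))) • T ((ℓ : ℤ) * n) ∧
      (∏ i ∈ Finset.range ℓ, ((ℓ : ℂ) * (n + 1) - i + ℓ * κ (-(i : ℤ)))) =
        ∏ j ∈ Finset.Icc 1 ℓ, (ℓ : ℂ) * ((n : ℂ) + j / ℓ + κ j) :=
  stmt2_general ℓ κ hper D hD
end
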